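/- For every positive integer d and every positive integer t, |G(d,t,L)| ≤ Σ_{e=1}^d ⌊(e−1)/t⌋ · |B_{e,L}|. -/

import Mathlib

open Polynomial

noncomputable section

/-- The orbit of `j : ZMod N` under multiplication by `q`. -/
def qOrbit (N q : ℕ) (j : ZMod N) : Set (ZMod N) :=
  Set.range fun k : ℕ => (q : ZMod N) ^ k * j

/-- The set `L` of orbits of `ZMod N` under multiplication by `q`. -/
def orbitSet (N q : ℕ) : Set (Set (ZMod N)) :=
  {l | ∃ j : ZMod N, l = qOrbit N q j}

/-- `β ^ j` for a residue class `j`. -/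
def bpow {E : Type*} [Monoid E] {N : ℕ} (β : E) (j : ZMod N) : E :=
  β ^ j.val

/-- The check-matrix entry `h_{i l} = ∑_{j ∈ l} ρ(β^j) β^{i j}`, as an element of `E`. -/
def hEntry {F E : Type*} [CommSemiring F] [CommSemiring E] [Algebra F E] {N : ℕ}
    (β : E) (ρ : Polynomial F) (i : ℕ) (l : Set (ZMod N)) : E :=
  ∑ᶠ j ∈ l, Polynomial.aeval (bpow β j) ρ * bpow β j ^ i

/-- The code `C(ρ, t)` inside `F^L`. -/
def codeSet (F E : Type*) [Field F] [Field E] [Algebra F E] (N q : ℕ)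
    (β : E) (ρ : Polynomial F) (t : ℕ) : Set (↥(orbitSet N q) → F) :=
  {c | ∀ i < t, ∑ᶠ l : orbitSet N q,
    algebraMap F E (c l) * hEntry β ρ i (l : Set (ZMod N)) = 0}

open scoped Classical in
/-- `deg c = ∑_{l : c_l ≠ 0} |l|`. -/
def wdeg {F : Type*} [Zero F] {N q : ℕ} (c : ↥(orbitSet N q) → F) : ℕ :=
  ∑ᶠ l : orbitSet N q, if c l ≠ 0 then (l : Set (ZMod N)).ncard else 0

/-- The set `B_{d,L}` of words of degree `d`. -/
def Bset (F : Type*) [Field F] (N q d : ℕ) : Set (↥(orbitSet N q) → F) :=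
  {r | wdeg r = d}

/-- The set `G_{d,t,L}` of monic irreducible polynomials `g` of degree `t` over `F` having
no roots in `E` such that `C(g⁻¹, t)` contains a word of `B_{d,L}`. -/
def Gset (F E : Type*) [Field F] [Field E] [Algebra F E] (N q : ℕ) (β : E)
    (d t : ℕ) : Set (Polynomial F) :=
  {g | g.Monic ∧ Irreducible g ∧ g.natDegree = t ∧
    (∀ x : E, Polynomial.aeval x g ≠ 0) ∧
    ∃ ginv : Polynomial F, ginv.degree < (N : WithBot ℕ) ∧
      ((X : Polynomial F) ^ N - 1 ∣ g * ginv - 1) ∧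
      ∃ r ∈ Bset F N q d, r ∈ codeSet F E N q β ginv t}

/-!
Fix a word `r ∈ B_{e,L}`, read it on exponents: `r_j := r_{[j]}`, with support `J`, `|J| = e`.
Put `f_r = ∑_{j ∈ J} r_j ∏_{k ∈ J, k ≠ j} (X - β^k)`, a nonzero polynomial of degree `≤ e - 1`
over `E` (evaluate at `β^j`). If `r ∈ C(g⁻¹, t)`, then `c_j := r_j g⁻¹(β^j) = r_j / g(β^j)`
satisfies `∑_j c_j β^{ij} = 0` for `i < t`; since `(g(X) - g(w)) / (X - w)` has degree `< t`
in `w`, this gives `∑_j c_j (g(X) - g(β^j)) / (X - β^j) = 0`,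
i.e. `f_r = g · ∑_j c_j ∏_{k ≠ j} (X - β^k)`.
Distinct monic irreducible polynomials are coprime, so at most `(e - 1) / t` of degree `t`
divide `f_r`. Summing over `r ∈ B_{e,L}` and over `e ≤ d` gives the bound.
-/

open Finset

section Orbits

variable {N q : ℕ}

def toOrbit (N q : ℕ) (j : ZMod N) : orbitSet N q := ⟨qOrbit N q j, j, rfl⟩

theorem mem_qOrbit_self (j : ZMod N) : j ∈ qOrbit N q j := ⟨0, by simp⟩

theorem qOrbit_eq_of_mem (hq : IsOfFinOrder (q : ZMod N)) {x j : ZMod N}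
    (h : x ∈ qOrbit N q j) : qOrbit N q x = qOrbit N q j := by
  obtain ⟨k, rfl⟩ := h
  have hk : (q : ZMod N) ^ ((orderOf (q : ZMod N) - 1) * k + k) = 1 := by
    rw [← add_one_mul, Nat.sub_one_add_one hq.orderOf_pos.ne', pow_mul, pow_orderOf_eq_one,
      one_pow]
  ext y
  constructor
  · rintro ⟨n, rfl⟩
    exact ⟨n + k, by dsimp only; rw [pow_add, mul_assoc]⟩
  · rintro ⟨n, rfl⟩
    refine ⟨n + (orderOf (q : ZMod N) - 1) * k, ?_⟩
    dsimp only
    rw [← mul_assoc, ← pow_add, add_assoc, pow_add, hk, mul_one]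

theorem toOrbit_eq_iff (hq : IsOfFinOrder (q : ZMod N)) {j : ZMod N} {l : orbitSet N q} :
    toOrbit N q j = l ↔ j ∈ (l : Set (ZMod N)) := by
  obtain ⟨l, x, rfl⟩ := l
  refine ⟨fun h => ?_, fun h => Subtype.ext (qOrbit_eq_of_mem hq h)⟩
  rw [← h]
  exact mem_qOrbit_self j

variable [NeZero N]

theorem finsum_orbitSet_finsum_mem (hq : IsOfFinOrder (q : ZMod N)) {M : Type*}
    [AddCommMonoid M] (φ : orbitSet N q → ZMod N → M) :
    ∑ᶠ l : orbitSet N q, ∑ᶠ j ∈ (l : Set (ZMod N)), φ l j =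
      ∑ j, φ (toOrbit N q j) j := by
  have hdisj : Pairwise (Function.onFun Disjoint fun l : orbitSet N q => (l : Set (ZMod N))) :=
    fun l l' hne => Set.disjoint_left.2 fun j hj hj' =>
      hne (((toOrbit_eq_iff hq).2 hj).symm.trans ((toOrbit_eq_iff hq).2 hj'))
  have hcover : ⋃ l : orbitSet N q, (l : Set (ZMod N)) = Set.univ :=
    Set.eq_univ_of_forall fun j => Set.mem_iUnion.2 ⟨toOrbit N q j, mem_qOrbit_self j⟩
  calc ∑ᶠ l : orbitSet N q, ∑ᶠ j ∈ (l : Set (ZMod N)), φ l j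
      = ∑ᶠ l : orbitSet N q, ∑ᶠ j ∈ (l : Set (ZMod N)), φ (toOrbit N q j) j :=
        finsum_congr fun l => finsum_mem_congr rfl fun j hj => by rw [(toOrbit_eq_iff hq).2 hj]
    _ = ∑ᶠ j ∈ ⋃ l : orbitSet N q, (l : Set (ZMod N)), φ (toOrbit N q j) j :=
        (finsum_mem_iUnion hdisj fun l => Set.toFinite _).symm
    _ = ∑ j, φ (toOrbit N q j) j := by
        rw [hcover, finsum_mem_univ, finsum_eq_sum_of_fintype]

open scoped Classical in
def wordSupport {F : Type*} [Zero F] (c : orbitSet N q → F) : Finset (ZMod N) :=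
  {j | c (toOrbit N q j) ≠ 0}

@[simp]
theorem mem_wordSupport {F : Type*} [Zero F] {c : orbitSet N q → F} {j : ZMod N} :
    j ∈ wordSupport c ↔ c (toOrbit N q j) ≠ 0 := by
  simp [wordSupport]

theorem wdeg_eq_card_wordSupport (hq : IsOfFinOrder (q : ZMod N)) {F : Type*} [Zero F]
    (c : orbitSet N q → F) : wdeg c = #(wordSupport c) := by
  classical
  calc wdeg c
      = ∑ᶠ l : orbitSet N q, ∑ᶠ j ∈ (l : Set (ZMod N)), if c l ≠ 0 then 1 else 0 := by
        refine finsum_congr fun l => ?_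
        split_ifs <;> simp
    _ = ∑ j, if c (toOrbit N q j) ≠ 0 then 1 else 0 := finsum_orbitSet_finsum_mem hq _
    _ = #(wordSupport c) := by rw [wordSupport, card_filter]

theorem sum_mul_aeval_mul_pow_eq_zero_of_mem_codeSet (hq : IsOfFinOrder (q : ZMod N))
    {F E : Type*} [Field F] [Field E] [Algebra F E] {β : E} {ρ : F[X]} {t : ℕ}
    {c : orbitSet N q → F} (hc : c ∈ codeSet F E N q β ρ t) {i : ℕ} (hi : i < t) :
    ∑ j, algebraMap F E (c (toOrbit N q j)) * (aeval (bpow β j) ρ * bpow β j ^ i) = 0 := by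
  rw [← finsum_orbitSet_finsum_mem hq
    fun l j => algebraMap F E (c l) * (aeval (bpow β j) ρ * bpow β j ^ i), ← hc i hi]
  exact finsum_congr fun l => (mul_finsum_mem _ _).symm

end Orbits

section DifferenceQuotient

variable {K ι : Type*} [CommRing K]

/-- `(g - g(w)) / (X - w)`, written out so that it is visibly a polynomial in `w` of degree
less than `g.natDegree`. -/
def diffQuotient (g : K[X]) (w : K) : K[X] :=
  ∑ n ∈ range (g.natDegree + 1), C (g.coeff n) * ∑ p ∈ range n, X ^ p * C w ^ (n - 1 - p)

theorem diffQuotient_mul_X_sub_C (g : K[X]) (w : K) :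
    diffQuotient g w * (X - C w) = g - C (g.eval w) := by
  calc diffQuotient g w * (X - C w)
      = ∑ n ∈ range (g.natDegree + 1), (C (g.coeff n) * X ^ n - C (g.coeff n * w ^ n)) := by
        rw [diffQuotient, sum_mul]
        refine sum_congr rfl fun n _ => ?_
        rw [mul_assoc, geom_sum₂_mul, map_mul, map_pow, mul_sub]
    _ = g - C (g.eval w) := by
        rw [sum_sub_distrib, ← map_sum, ← eval_eq_sum_range, ← as_sum_range_C_mul_X_pow]

theorem sum_C_mul_diffQuotient_eq_zero (g : K[X]) {s : Finset ι} {v c : ι → K}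
    (hc : ∀ i < g.natDegree, ∑ j ∈ s, c j * v j ^ i = 0) :
    ∑ j ∈ s, C (c j) * diffQuotient g (v j) = 0 := by
  simp_rw [diffQuotient, mul_sum]
  rw [sum_comm]
  refine sum_eq_zero fun n hn => ?_
  rw [sum_comm]
  refine sum_eq_zero fun p hp => ?_
  have hdeg : n - 1 - p < g.natDegree := by
    rw [mem_range] at hn hp
    omega
  calc ∑ j ∈ s, C (c j) * (C (g.coeff n) * (X ^ p * C (v j) ^ (n - 1 - p)))
      = C (g.coeff n) * X ^ p * C (∑ j ∈ s, c j * v j ^ (n - 1 - p)) := by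
        rw [map_sum, mul_sum]
        refine sum_congr rfl fun j _ => ?_
        rw [map_mul, map_pow]
        ring
    _ = 0 := by rw [hc _ hdeg, C_0, mul_zero]

open Lagrange in
theorem sum_C_mul_eval_mul_nodal_erase [DecidableEq ι] (g : K[X]) {s : Finset ι} {v c : ι → K}
    (hc : ∀ i < g.natDegree, ∑ j ∈ s, c j * v j ^ i = 0) :
    ∑ j ∈ s, C (c j * g.eval (v j)) * nodal (s.erase j) v =
      g * ∑ j ∈ s, C (c j) * nodal (s.erase j) v := by
  rw [← sub_eq_zero, mul_sum, ← sum_sub_distrib]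
  calc ∑ j ∈ s, (C (c j * g.eval (v j)) * nodal (s.erase j) v
        - g * (C (c j) * nodal (s.erase j) v))
      = ∑ j ∈ s, -(C (c j) * diffQuotient g (v j) * nodal s v) :=
        sum_congr rfl fun j hj => by
          rw [nodal_eq_mul_nodal_erase hj, map_mul]
          linear_combination (C (c j) * nodal (s.erase j) v) * diffQuotient_mul_X_sub_C g (v j)
    _ = -((∑ j ∈ s, C (c j) * diffQuotient g (v j)) * nodal s v) := by
        rw [sum_neg_distrib, sum_mul]
    _ = 0 := by rw [sum_C_mul_diffQuotient_eq_zero g hc, zero_mul, neg_zero]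

end DifferenceQuotient

section NodalSum

open Lagrange

variable {K ι : Type*} [Field K] [DecidableEq ι] {s : Finset ι} {v : ι → K}

theorem natDegree_sum_C_mul_nodal_erase_le (a : ι → K) :
    (∑ j ∈ s, C (a j) * nodal (s.erase j) v).natDegree ≤ #s - 1 :=
  natDegree_sum_le_of_forall_le _ _ fun j hj =>
    (natDegree_C_mul_le _ _).trans (by rw [natDegree_nodal, card_erase_of_mem hj])

theorem sum_C_mul_nodal_erase_ne_zero (hv : Set.InjOn v s) {a : ι → K} {j₀ : ι}
    (hj₀ : j₀ ∈ s) (ha : a j₀ ≠ 0) :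
    ∑ j ∈ s, C (a j) * nodal (s.erase j) v ≠ 0 := by
  intro h
  have heval := congrArg (eval (v j₀)) h
  rw [eval_finsetSum, sum_eq_single j₀ (fun j _ hne => ?_) (fun h => absurd hj₀ h), eval_zero,
    eval_mul, eval_C] at heval
  · refine mul_ne_zero ha (eval_nodal_not_at_node fun k hk hvk => ?_) heval
    exact (mem_erase.1 hk).1 (hv (mem_erase.1 hk).2 hj₀ hvk.symm)
  · rw [eval_mul, eval_nodal_at_node (mem_erase.2 ⟨hne.symm, hj₀⟩), mul_zero]

end NodalSum

theorem ncard_le_natDegree_div {F E : Type*} [Field F] [Field E] [Algebra F E] {f : E[X]}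
    (hf : f ≠ 0) {t : ℕ} {S : Set F[X]}
    (hS : ∀ g ∈ S,
      g.Monic ∧ Irreducible g ∧ g.natDegree = t ∧ g.map (algebraMap F E) ∣ f) :
    S.ncard ≤ f.natDegree / t := by
  obtain rfl | ht := t.eq_zero_or_pos
  · have hempty : S = ∅ := Set.eq_empty_of_forall_notMem fun g hg => by
      obtain ⟨hmon, hirr, hdeg, -⟩ := hS g hg
      exact hirr.not_isUnit (hmon.natDegree_eq_zero.1 hdeg ▸ isUnit_one)
    simp [hempty]
  obtain hfin | hinf := S.finite_or_infinite
  swap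
  · simp [hinf.ncard]
  have hS' : ∀ g ∈ hfin.toFinset, g.Monic ∧ Irreducible g ∧ g.natDegree = t ∧
      g.map (algebraMap F E) ∣ f := fun g hg => hS g (hfin.mem_toFinset.1 hg)
  have hcop : (hfin.toFinset : Set F[X]).Pairwise
      (Function.onFun IsCoprime fun g => g.map (algebraMap F E)) := by
    intro g hg g' hg' hne
    obtain ⟨hmon, hirr, -⟩ := hS' g hg
    obtain ⟨hmon', hirr', -⟩ := hS' g' hg'
    refine IsCoprime.map ((hirr.coprime_iff_not_dvd).2 fun hdvd => ?_)
      (mapRingHom (algebraMap F E))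
    exact hne (eq_of_monic_of_associated hmon hmon' (hirr.associated_of_dvd hirr' hdvd))
  have hdvd := prod_dvd_of_coprime hcop fun g hg => (hS' g hg).2.2.2
  rw [Nat.le_div_iff_mul_le ht, Set.ncard_eq_toFinset_card S hfin]
  calc #hfin.toFinset * t = (∏ g ∈ hfin.toFinset, g.map (algebraMap F E)).natDegree := by
        rw [natDegree_prod_of_monic _ _ fun g hg => (hS' g hg).1.map _, sum_const_nat]
        exact fun g hg => ((hS' g hg).1.natDegree_map _).trans (hS' g hg).2.2.1
    _ ≤ f.natDegree := natDegree_le_of_dvd hdvd hf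

section WordPolynomial

open Lagrange

variable {N q : ℕ}

theorem bpow_pow_eq_one {M : Type*} [Monoid M] {β : M} (hβ : β ^ N = 1) (j : ZMod N) :
    bpow β j ^ N = 1 := by
  rw [bpow, ← pow_mul, mul_comm, pow_mul, hβ, one_pow]

variable [NeZero N]

theorem bpow_injective {M : Type*} [Monoid M] {β : M} (hβ : orderOf β = N) :
    Function.Injective (bpow β : ZMod N → M) := fun j k h =>
  ZMod.val_injective N (pow_injOn_Iio_orderOf (hβ ▸ j.val_lt) (hβ ▸ k.val_lt) h)

variable {F E : Type*} [Field F] [Field E] [Algebra F E]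

def wordPoly (β : E) (c : orbitSet N q → F) : E[X] :=
  ∑ j ∈ wordSupport c,
    C (algebraMap F E (c (toOrbit N q j))) * nodal ((wordSupport c).erase j) (bpow β)

theorem map_dvd_wordPoly (hq : IsOfFinOrder (q : ZMod N)) {β : E} (hβ : β ^ N = 1)
    {g ginv : F[X]} (hginv : (X : F[X]) ^ N - 1 ∣ g * ginv - 1) {c : orbitSet N q → F}
    (hc : c ∈ codeSet F E N q β ginv g.natDegree) :
    g.map (algebraMap F E) ∣ wordPoly β c := by
  have hinv (j : ZMod N) :
      aeval (bpow β j) ginv * (g.map (algebraMap F E)).eval (bpow β j) = 1 := by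
    obtain ⟨u, hu⟩ := hginv
    have h := congrArg (aeval (bpow β j)) hu
    rw [map_sub, map_mul, map_one, map_mul, map_sub, map_pow, aeval_X, bpow_pow_eq_one hβ,
      map_one, sub_self, zero_mul, sub_eq_zero] at h
    rw [eval_map_algebraMap, mul_comm, h]
  set a : ZMod N → E := fun j => algebraMap F E (c (toOrbit N q j)) * aeval (bpow β j) ginv
  have hsyn : ∀ i < (g.map (algebraMap F E)).natDegree,
      ∑ j ∈ wordSupport c, a j * bpow β j ^ i = 0 := by
    intro i hi
    rw [natDegree_map] at hi
    rw [← sum_mul_aeval_mul_pow_eq_zero_of_mem_codeSet hq hc hi]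
    refine (sum_subset (subset_univ _) fun j _ hj => ?_).trans
      (sum_congr rfl fun j _ => mul_assoc _ _ _)
    rw [mem_wordSupport, not_not] at hj
    simp only [a, hj, map_zero, zero_mul]
  refine ⟨_, Eq.trans ?_ (sum_C_mul_eval_mul_nodal_erase _ hsyn)⟩
  refine sum_congr rfl fun j _ => ?_
  rw [mul_assoc, hinv, mul_one]

theorem ncard_Gset_le [Finite F] (hq : IsOfFinOrder (q : ZMod N)) {β : E} (hβ : orderOf β = N)
    {e : ℕ} (he : 0 < e) (t : ℕ) :
    (Gset F E N q β e t).ncard ≤ (e - 1) / t * (Bset F N q e).ncard := by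
  have hB : (Bset F N q e).Finite := Set.toFinite _
  set G := Gset F E N q β e t
  set piece : (orbitSet N q → F) → Set F[X] :=
    fun r => {g ∈ G | g.map (algebraMap F E) ∣ wordPoly β r}
  have hcover : G = ⋃ r ∈ hB.toFinset, piece r := by
    refine Set.Subset.antisymm (fun g hg => ?_) (Set.iUnion₂_subset fun _ _ => Set.sep_subset _ _)
    obtain ⟨-, -, hdeg, -, ginv, -, hginv, r, hrB, hrc⟩ := id hg
    exact Set.mem_biUnion (hB.mem_toFinset.2 hrB)
      ⟨hg, map_dvd_wordPoly hq (hβ ▸ pow_orderOf_eq_one β) hginv (hdeg ▸ hrc)⟩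
  have hpiece : ∀ r ∈ hB.toFinset, (piece r).ncard ≤ (e - 1) / t := by
    intro r hr
    have hcard : #(wordSupport r) = e :=
      (wdeg_eq_card_wordSupport hq r).symm.trans (hB.mem_toFinset.1 hr)
    obtain ⟨j₀, hj₀⟩ := card_pos.1 (hcard ▸ he : 0 < #(wordSupport r))
    have hne : wordPoly β r ≠ 0 := sum_C_mul_nodal_erase_ne_zero (bpow_injective hβ).injOn hj₀
      (by simpa using hj₀)
    refine (ncard_le_natDegree_div hne fun g hg => ?_).trans
      (Nat.div_le_div_right (hcard ▸ natDegree_sum_C_mul_nodal_erase_le _))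
    obtain ⟨⟨hmon, hirr, hdeg, -⟩, hdvd⟩ := hg
    exact ⟨hmon, hirr, hdeg, hdvd⟩
  calc G.ncard = (⋃ r ∈ hB.toFinset, piece r).ncard := congrArg Set.ncard hcover
    _ ≤ ∑ r ∈ hB.toFinset, (piece r).ncard := set_ncard_biUnion_le _ _
    _ ≤ ∑ _r ∈ hB.toFinset, (e - 1) / t := sum_le_sum hpiece
    _ = (e - 1) / t * (Bset F N q e).ncard := by
        rw [sum_const, smul_eq_mul, mul_comm, Set.ncard_eq_toFinset_card _ hB]

end WordPolynomial

theorem card_GsetUnion_le_general (q m : ℕ) (hm : 0 < m)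
    (F E : Type*) [Field F] [Field E] [Fintype F] [Algebra F E]
    (hF : Fintype.card F = q)
    (β : E) (hβ : orderOf β = q ^ m - 1) (d t : ℕ) :
    (⋃ e ∈ Finset.Icc 1 d, Gset F E (q ^ m - 1) q β e t).ncard ≤
      ∑ e ∈ Finset.Icc 1 d, ((e - 1) / t) * (Bset F (q ^ m - 1) q e).ncard := by
  have hq : 1 < q := hF ▸ Fintype.one_lt_card
  have hqm : 1 < q ^ m := Nat.one_lt_pow hm.ne' hq
  have : NeZero (q ^ m - 1) := ⟨by omega⟩
  have hqN : IsOfFinOrder (q : ZMod (q ^ m - 1)) := by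
    have hpow : ∀ N, q ^ m = N + 1 → (q : ZMod N) ^ m = 1 := fun N h => by
      rw [← Nat.cast_pow, h, Nat.cast_add, ZMod.natCast_self, zero_add, Nat.cast_one]
    exact isOfFinOrder_iff_pow_eq_one.2 ⟨m, hm, hpow _ (by omega)⟩
  calc _ ≤ ∑ e ∈ Icc 1 d, (Gset F E (q ^ m - 1) q β e t).ncard := set_ncard_biUnion_le _ _
    _ ≤ _ := sum_le_sum fun e he => ncard_Gset_le hqN hβ (mem_Icc.1 he).1 t

/-- `|G(d,t,L)| ≤ ∑_{e=1}^d ⌊(e−1)/t⌋ · |B_{e,L}|` where `G(d,t,L) = ∪_{e=1}^d G_{e,t,L}`. -/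
theorem card_GsetUnion_le (q m : ℕ) (hm : 0 < m) (hqm : Nat.Coprime q m)
    (F E : Type*) [Field F] [Field E] [Fintype F] [Fintype E] [Algebra F E]
    (hF : Fintype.card F = q) (hE : Fintype.card E = q ^ m)
    (β : E) (hβ : orderOf β = q ^ m - 1) (d t : ℕ) (hd : 0 < d) (ht : 0 < t) :
    (⋃ e ∈ Finset.Icc 1 d, Gset F E (q ^ m - 1) q β e t).ncard ≤
      ∑ e ∈ Finset.Icc 1 d, ((e - 1) / t) * (Bset F (q ^ m - 1) q e).ncard :=
  card_GsetUnion_le_general q m hm F E hF β hβ d t
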